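/- Let C = Av(B) be a finitely based avoidance set of double ascents under the (value-)consecutive order, and let K = Av(W(B)) be the avoidance set of words over {l,r} under the consecutive factor order, where W(B) is the union of the word sets associated with the elements of B. Then C contains an infinite antichain if and only if K contains an infinite antichain. -/

import Mathlib

/-- The permutation (as the list of values read by position, 0-indexed) associated
with a word over `{l, r}` (encoded `l = true`, `r = false`). -/
def assocPerm (w : List Bool) : List ℕ :=
  ((List.range w.length).filter fun i => w.getD i false) ++
    ((List.range w.length).filter fun i => !(w.getD i false))

/-- The number of consecutive inversions (descents) of a sequence. -/
def descents (s : List ℕ) : ℕ :=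
  (s.zip s.tail).countP fun p => decide (p.2 < p.1)

/-- Two sequences are order-isomorphic. -/
def OrdIso (s t : List ℕ) : Prop :=
  s.length = t.length ∧ ∀ i j, i < s.length → j < s.length →
    (s.getD i 0 < s.getD j 0 ↔ t.getD i 0 < t.getD j 0)

/-- The value-consecutive order on permutations. -/
def ConsLE (s t : List ℕ) : Prop :=
  ∃ k : ℕ, OrdIso s (t.filter fun v => decide (k ≤ v ∧ v < k + s.length))

/-!
A word over `{l, r}` encodes the double ascent `assocPerm w`: the positions of its letters `l`,
followed by the positions of its letters `r`. Restricting `assocPerm w` to a window of values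
gives, up to a shift, `assocPerm` of the corresponding factor of `w`; as permutations of `range n`
are determined by their order type, the patterns of `assocPerm w` are exactly the permutations
`assocPerm u` of the factors `u` of `w`.

Every double ascent is `assocPerm` of a word (mark the values before its descent as `l`), so any
choice of words turns an antichain of `Av(B)` into one of `Av(W(B))`. Conversely, `assocPerm` is
injective away from the words `l^a r^c`; these are well-quasi-ordered by Dickson's lemma, so an
antichain of words contains only finitely many of them, and `assocPerm` maps the rest to an
antichain of `Av(B)`.
-/

theorem map_getD_range (s : List ℕ) : (List.range s.length).map (s.getD · 0) = s :=
  List.ext_getElem (by simp) fun i _ h => by simp [List.getElem?_eq_getElem h]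

theorem countP_range_lt {v n : ℕ} (h : v ≤ n) : (List.range n).countP (· < v) = v := by
  obtain ⟨t, rfl⟩ := Nat.exists_eq_add_of_le h
  change Nat.count (· < v) (v + t) = v
  rw [Nat.count_add, Nat.count_iff_forall.2 fun _ => id, Nat.count_iff_forall_not.2 (by omega),
    add_zero]

theorem countP_getD_lt {s : List ℕ} (hs : s.Perm (List.range s.length)) {i : ℕ}
    (hi : i < s.length) :
    (List.range s.length).countP (fun j => s.getD j 0 < s.getD i 0) = s.getD i 0 := by
  have hmem : s.getD i 0 < s.length := by
    simpa [List.getElem?_eq_getElem hi] using hs.subset (List.getElem_mem hi)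
  calc (List.range s.length).countP (fun j => s.getD j 0 < s.getD i 0)
      = ((List.range s.length).map (s.getD · 0)).countP (· < s.getD i 0) := by
        rw [List.countP_map]; rfl
    _ = (List.range s.length).countP (· < s.getD i 0) := by rw [map_getD_range, hs.countP_eq]
    _ = s.getD i 0 := countP_range_lt hmem.le

theorem OrdIso.symm {s t : List ℕ} (h : OrdIso s t) : OrdIso t s :=
  ⟨h.1.symm, fun i j hi hj => (h.2 i j (h.1 ▸ hi) (h.1 ▸ hj)).symm⟩

theorem OrdIso.trans {s t u : List ℕ} (h₁ : OrdIso s t) (h₂ : OrdIso t u) : OrdIso s u :=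
  ⟨h₁.1.trans h₂.1, fun i j hi hj =>
    (h₁.2 i j hi hj).trans (h₂.2 i j (h₁.1 ▸ hi) (h₁.1 ▸ hj))⟩

theorem ordIso_map_add (t : List ℕ) (k : ℕ) : OrdIso t (t.map (k + ·)) :=
  ⟨(List.length_map _).symm, fun i j hi hj => by
    simp [List.getElem?_eq_getElem hi, List.getElem?_eq_getElem hj]⟩

-- An entry of a permutation of `range n` is the number of entries below it, an order invariant.
theorem OrdIso.eq_of_perm {s t : List ℕ} (h : OrdIso s t) (hs : s.Perm (List.range s.length))
    (ht : t.Perm (List.range t.length)) : s = t := by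
  refine List.ext_getElem h.1 fun i hi hi' => ?_
  rw [← List.getD_eq_getElem _ 0 hi, ← List.getD_eq_getElem _ 0 hi', ← countP_getD_lt hs hi,
    ← countP_getD_lt ht hi', ← h.1]
  exact List.countP_congr fun j hj => by
    simpa using h.2 j i (List.mem_range.1 hj) hi

theorem assocPerm_perm (w : List Bool) : (assocPerm w).Perm (List.range w.length) :=
  List.filter_append_perm _ _

theorem assocPerm_length (w : List Bool) : (assocPerm w).length = w.length := by
  simpa using (assocPerm_perm w).length_eq

theorem assocPerm_perm_range (w : List Bool) :
    (assocPerm w).Perm (List.range (assocPerm w).length) := by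
  rw [assocPerm_length]; exact assocPerm_perm w

theorem filter_window_filter_range (w : List Bool) (p : Bool → Bool) (k m : ℕ) :
    ((List.range w.length).filter (fun i => p (w.getD i false))).filter
        (fun v => decide (k ≤ v ∧ v < k + m)) =
      ((List.range ((w.drop k).take m).length).filter
        (fun i => p (((w.drop k).take m).getD i false))).map (k + ·) := by
  refine (List.pairwise_lt_range.filter _).filter _ |>.eq_of_mem_iff
    ((List.pairwise_lt_range.filter _).map _ fun _ _ => by omega) fun x => ?_
  simp only [List.mem_filter, List.mem_range, List.mem_map, List.length_take, List.length_drop,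
    List.getD_eq_getElem?_getD, decide_eq_true_eq]
  constructor
  · rintro ⟨⟨hx, hp⟩, hk, hm⟩
    refine ⟨x - k, ⟨by omega, ?_⟩, by omega⟩
    simpa [List.getElem?_take, List.getElem?_drop, show x - k < m by omega,
      show k + (x - k) = x by omega] using hp
  · rintro ⟨i, ⟨hi, hp⟩, rfl⟩
    refine ⟨⟨by omega, ?_⟩, by omega, by omega⟩
    simpa [List.getElem?_take, List.getElem?_drop, show i < m by omega] using hp

theorem assocPerm_filter_window (w : List Bool) (k m : ℕ) :
    (assocPerm w).filter (fun v => decide (k ≤ v ∧ v < k + m)) =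
      (assocPerm ((w.drop k).take m)).map (k + ·) := by
  simp only [assocPerm, List.filter_append, List.map_append]
  congr 1
  exacts [filter_window_filter_range w id k m, filter_window_filter_range w not k m]

theorem consLE_assocPerm_of_infix {u w : List Bool} (h : u <:+: w) :
    ConsLE (assocPerm u) (assocPerm w) := by
  obtain ⟨p, s, rfl⟩ := h
  refine ⟨p.length, ?_⟩
  rw [assocPerm_length, assocPerm_filter_window, List.append_assoc, List.drop_left,
    List.take_left]
  exact ordIso_map_add _ _

theorem exists_infix_of_consLE_assocPerm {σ : List ℕ} {w : List Bool}
    (hσ : σ.Perm (List.range σ.length)) (h : ConsLE σ (assocPerm w)) :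
    ∃ u, u <:+: w ∧ assocPerm u = σ := by
  obtain ⟨k, hk⟩ := h
  rw [assocPerm_filter_window] at hk
  refine ⟨(w.drop k).take σ.length,
    (List.take_prefix _ _).isInfix.trans (List.drop_suffix k w).isInfix, ?_⟩
  exact ((hk.trans (ordIso_map_add _ k).symm).eq_of_perm hσ (assocPerm_perm_range _)).symm

theorem descents_cons_cons (a b : ℕ) (l : List ℕ) :
    descents (a :: b :: l) = (if b < a then 1 else 0) + descents (b :: l) := by
  simp only [descents, List.tail_cons, List.zip_cons_cons, List.countP_cons, decide_eq_true_eq]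
  omega

theorem descents_eq_zero_iff {s : List ℕ} : descents s = 0 ↔ s.IsChain (· ≤ ·) := by
  induction s with
  | nil => simp [descents]
  | cons a l ih =>
    cases l with
    | nil => simp [descents]
    | cons b l => rw [descents_cons_cons, List.isChain_cons_cons, ← ih]; split <;> omega

theorem descents_eq_zero_of_pairwise {s : List ℕ} (h : s.Pairwise (· < ·)) : descents s = 0 :=
  descents_eq_zero_iff.2 (h.isChain.imp fun _ _ => le_of_lt)

theorem pairwise_lt_of_descents_eq_zero {s : List ℕ} (hs : s.Nodup) (h : descents s = 0) :
    s.Pairwise (· < ·) :=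
  ((List.isChain_iff_pairwise.1 (descents_eq_zero_iff.1 h)).and hs).imp fun h =>
    lt_of_le_of_ne h.1 h.2

theorem descents_append_le (s t : List ℕ) :
    descents (s ++ t) ≤ descents s + descents t + 1 := by
  induction s with
  | nil => rw [List.nil_append]; omega
  | cons a s ih =>
    cases s with
    | nil =>
      cases t with
      | nil => simp [descents]
      | cons b t => rw [List.singleton_append, descents_cons_cons]; split <;> omega
    | cons b s =>
      simp only [List.cons_append, descents_cons_cons] at ih ⊢
      omega

theorem descents_assocPerm_le_one (w : List Bool) : descents (assocPerm w) ≤ 1 := by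
  have h := descents_append_le ((List.range w.length).filter fun i => w.getD i false)
    ((List.range w.length).filter fun i => !(w.getD i false))
  rwa [descents_eq_zero_of_pairwise (List.pairwise_lt_range.filter _),
    descents_eq_zero_of_pairwise (List.pairwise_lt_range.filter _)] at h

theorem exists_pairwise_append_of_descents_le_one {s : List ℕ} (hs : s.Nodup)
    (hd : descents s ≤ 1) :
    ∃ A D, s = A ++ D ∧ A.Pairwise (· < ·) ∧ D.Pairwise (· < ·) := by
  induction s with
  | nil => exact ⟨[], [], rfl, .nil, .nil⟩
  | cons a l ih =>
    cases l with
    | nil => exact ⟨[a], [], rfl, List.pairwise_singleton _ _, .nil⟩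
    | cons b l =>
      rw [descents_cons_cons] at hd
      by_cases hba : b < a
      · refine ⟨[a], b :: l, rfl, List.pairwise_singleton _ _,
          pairwise_lt_of_descents_eq_zero hs.of_cons ?_⟩
        simp only [hba, if_true] at hd
        omega
      · have hab : a < b := lt_of_le_of_ne (not_lt.1 hba) fun h => by simp_all
        obtain ⟨A, D, hl, hA, hD⟩ := ih hs.of_cons (by omega)
        refine ⟨a :: A, D, by rw [hl, List.cons_append], ?_, hD⟩
        rw [← List.isChain_iff_pairwise, List.isChain_cons, List.isChain_iff_pairwise]
        refine ⟨fun c hc => ?_, hA⟩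
        obtain ⟨A', rfl⟩ := List.head?_eq_some_iff.1 hc
        simp_all

theorem assocPerm_map_range_mem {A D : List ℕ} {n : ℕ} (hA : A.Pairwise (· < ·))
    (hD : D.Pairwise (· < ·)) (hperm : (A ++ D).Perm (List.range n)) :
    assocPerm ((List.range n).map fun i => decide (i ∈ A)) = A ++ D := by
  have hmem : ∀ x, x ∈ A ∨ x ∈ D ↔ x < n := fun x => by
    rw [← List.mem_append, hperm.mem_iff, List.mem_range]
  have hdisj : A.Disjoint D := List.disjoint_of_nodup_append (hperm.nodup_iff.2 List.nodup_range)
  have hword : ∀ x < n,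
      ((List.range n).map fun i => decide (i ∈ A)).getD x false = decide (x ∈ A) :=
    fun x hx => by simp [List.getD_eq_getElem?_getD, List.getElem?_range hx]
  simp only [assocPerm, List.length_map, List.length_range]
  congr 1
  · refine (List.pairwise_lt_range.filter _).eq_of_mem_iff hA fun x => ?_
    rw [List.mem_filter, List.mem_range]
    refine ⟨fun ⟨hx, h⟩ => ?_, fun h => ?_⟩
    · rwa [hword x hx, decide_eq_true_iff] at h
    · have hx := (hmem x).1 (.inl h)
      rw [hword x hx, decide_eq_true_iff]
      exact ⟨hx, h⟩
  · refine (List.pairwise_lt_range.filter _).eq_of_mem_iff hD fun x => ?_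
    rw [List.mem_filter, List.mem_range]
    refine ⟨fun ⟨hx, h⟩ => ?_, fun h => ?_⟩
    · rw [hword x hx, Bool.not_eq_true', decide_eq_false_iff_not] at h
      exact ((hmem x).2 hx).resolve_left h
    · have hx := (hmem x).1 (.inr h)
      rw [hword x hx, Bool.not_eq_true', decide_eq_false_iff_not]
      exact ⟨hx, fun hA => hdisj hA h⟩

theorem exists_assocPerm_eq {σ : List ℕ} (hσ : σ.Perm (List.range σ.length))
    (hd : descents σ ≤ 1) : ∃ w, assocPerm w = σ := by
  obtain ⟨A, D, hAD, hA, hD⟩ :=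
    exists_pairwise_append_of_descents_le_one (hσ.nodup_iff.2 List.nodup_range) hd
  exact ⟨_, hAD ▸ assocPerm_map_range_mem hA hD (hAD ▸ hσ)⟩

theorem List.pairwise_append_of_append_eq_append {α : Type*} {r : α → α → Prop} [IsTrans α r]
    {A D A' D' : List α} (h : A ++ D = A' ++ D') (hlen : A.length ≠ A'.length)
    (hA : A.Pairwise r) (hD : D.Pairwise r) (hA' : A'.Pairwise r) (hD' : D'.Pairwise r) :
    (A ++ D).Pairwise r := by
  rcases List.append_eq_append_iff.1 h with ⟨B, rfl, rfl⟩ | ⟨B, rfl, rfl⟩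
  · have hB : B ≠ [] := by rintro rfl; simp at hlen
    rw [← List.append_assoc, ← List.isChain_iff_pairwise]
    exact hA'.isChain.append_overlap hD.isChain hB
  · have hB : B ≠ [] := by rintro rfl; simp at hlen
    rw [List.append_assoc, ← List.isChain_iff_pairwise, ← List.append_assoc]
    exact hA.isChain.append_overlap hD'.isChain hB

def IsIncreasingWord (w : List Bool) : Prop :=
  ∃ a c, w = List.replicate a true ++ List.replicate c false

theorem map_range_mem_filter_getD (w : List Bool) :
    (List.range w.length).map
      (fun i => decide (i ∈ (List.range w.length).filter (w.getD · false))) = w :=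
  List.ext_getElem (by simp) fun i _ h => by simp [h]

theorem map_range_mem_range {a n : ℕ} (h : a ≤ n) :
    (List.range n).map (fun i => decide (i ∈ List.range a)) =
      List.replicate a true ++ List.replicate (n - a) false := by
  refine List.ext_getElem (by simp; omega) fun i _ _ => ?_
  simp [List.getElem_append]

theorem isIncreasingWord_of_pairwise_assocPerm {w : List Bool}
    (h : (assocPerm w).Pairwise (· < ·)) : IsIncreasingWord w := by
  set A := (List.range w.length).filter (w.getD · false)
  have hlen : A.length ≤ w.length := (List.length_filter_le _ _).trans_eq List.length_range
  have hA : A = List.range A.length := by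
    have hrange : A ++ _ = List.range w.length :=
      (assocPerm_perm w).eq_of_pairwise' h List.pairwise_lt_range
    rw [← min_eq_left hlen, ← List.take_range, ← hrange, List.take_left]
  refine ⟨A.length, w.length - A.length, ?_⟩
  rw [← map_range_mem_range hlen, ← hA]
  exact (map_range_mem_filter_getD w).symm

theorem eq_or_isIncreasingWord_of_assocPerm_eq {u v : List Bool} (h : assocPerm u = assocPerm v) :
    u = v ∨ IsIncreasingWord v := by
  have hlen : u.length = v.length := by rw [← assocPerm_length u, h, assocPerm_length]
  by_cases hA : ((List.range u.length).filter (u.getD · false)).length =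
    ((List.range v.length).filter (v.getD · false)).length
  · left
    rw [← map_range_mem_filter_getD u, ← map_range_mem_filter_getD v, (List.append_inj h hA).1,
      hlen]
  · right
    refine isIncreasingWord_of_pairwise_assocPerm ?_
    rw [← h]
    exact List.pairwise_append_of_append_eq_append h hA
      (List.pairwise_lt_range.filter _) (List.pairwise_lt_range.filter _)
      (List.pairwise_lt_range.filter _) (List.pairwise_lt_range.filter _)

theorem replicate_append_replicate_infix {α : Type*} (x y : α) {a a' c c' : ℕ} (ha : a ≤ a')
    (hc : c ≤ c') :
    List.replicate a x ++ List.replicate c y <:+: List.replicate a' x ++ List.replicate c' y := by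
  refine ⟨List.replicate (a' - a) x, List.replicate (c' - c) y, ?_⟩
  rw [← List.append_assoc, ← List.replicate_add, List.append_assoc, ← List.replicate_add,
    Nat.sub_add_cancel ha, Nat.add_sub_cancel' hc]

theorem partiallyWellOrderedOn_isIncreasingWord :
    {w | IsIncreasingWord w}.PartiallyWellOrderedOn (· <:+: ·) := by
  have hset : {w | IsIncreasingWord w} =
      (fun p : ℕ × ℕ => List.replicate p.1 true ++ List.replicate p.2 false) '' Set.univ := by
    ext w
    simp [IsIncreasingWord, eq_comm]
  rw [hset]
  exact (Set.isPWO_of_wellQuasiOrderedLE (Set.univ : Set (ℕ × ℕ))).image_of_monotone_on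
    fun p _ q _ hpq => replicate_append_replicate_infix _ _ hpq.1 hpq.2

theorem exists_injective_not_isIncreasingWord {g : ℕ → List Bool}
    (hg : ∀ j k, j ≠ k → ¬ g j <:+: g k) :
    ∃ e : ℕ → ℕ, e.Injective ∧ ∀ n, ¬ IsIncreasingWord (g (e n)) := by
  have hfin : {k | IsIncreasingWord (g k)}.Finite := by
    by_contra hinf
    let e := Set.Infinite.natEmbedding _ hinf
    obtain ⟨m, n, hmn, hinfix⟩ :=
      partiallyWellOrderedOn_isIncreasingWord.exists_lt (f := fun n => g (e n)) fun n => (e n).2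
    exact hg _ _ (fun h => hmn.ne (e.injective (Subtype.ext h))) hinfix
  let e := hfin.infinite_compl.natEmbedding
  exact ⟨fun n => e n, Subtype.val_injective.comp e.injective, fun n => (e n).2⟩

theorem stmt19_general (B : Set (List ℕ))
    (hB : ∀ σ ∈ B, σ ≠ [] ∧ σ.Perm (List.range σ.length) ∧ descents σ ≤ 1) :
    ((∃ f : ℕ → List ℕ,
        (∀ k, (f k).Perm (List.range (f k).length) ∧ descents (f k) ≤ 1 ∧
          ∀ σ ∈ B, ¬ ConsLE σ (f k)) ∧
        (∀ j k, j ≠ k → ¬ ConsLE (f j) (f k))) ↔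
      (∃ g : ℕ → List Bool,
        (∀ k, ∀ w : List Bool, w ≠ [] → assocPerm w ∈ B → ¬ w <:+: g k) ∧
        (∀ j k, j ≠ k → ¬ g j <:+: g k))) := by
  constructor
  · rintro ⟨f, hf, hanti⟩
    choose w hw using fun k => exists_assocPerm_eq (hf k).1 (hf k).2.1
    refine ⟨w, fun k u _ hu hinfix => (hf k).2.2 _ hu ?_,
      fun j k hjk hinfix => hanti j k hjk ?_⟩
    · simpa only [hw] using consLE_assocPerm_of_infix hinfix
    · simpa only [hw] using consLE_assocPerm_of_infix hinfix
  · rintro ⟨g, havoid, hanti⟩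
    obtain ⟨e, he, hinc⟩ := exists_injective_not_isIncreasingWord hanti
    refine ⟨fun n => assocPerm (g (e n)), fun n => ⟨assocPerm_perm_range _,
      descents_assocPerm_le_one _, fun σ hσ hle => ?_⟩, fun j k hjk hle => ?_⟩
    · obtain ⟨hne, hperm, -⟩ := hB σ hσ
      obtain ⟨u, hinfix, rfl⟩ := exists_infix_of_consLE_assocPerm hperm hle
      exact havoid _ u (by rintro rfl; exact hne rfl) hσ hinfix
    · obtain ⟨u, hinfix, hu⟩ := exists_infix_of_consLE_assocPerm (assocPerm_perm_range _) hle
      obtain rfl := (eq_or_isIncreasingWord_of_assocPerm_eq hu).resolve_right (hinc j)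
      exact hanti _ _ (he.ne hjk) hinfix

/-- Let `B` be a finite set of (nonempty) double ascents,
`C = Av(B)` the corresponding avoidance set of double ascents under the
value-consecutive order, and `K = Av(W(B))` the avoidance set of words over
`{l, r}` under the contiguous factor order, where `W(B)` is the set of words
associated with elements of `B`.  Then `C` contains an infinite antichain iff `K`
does. -/
theorem stmt19 (B : Set (List ℕ)) (hfin : B.Finite)
    (hB : ∀ σ ∈ B, σ ≠ [] ∧ σ.Perm (List.range σ.length) ∧ descents σ ≤ 1) :
    ((∃ f : ℕ → List ℕ,
        (∀ k, (f k).Perm (List.range (f k).length) ∧ descents (f k) ≤ 1 ∧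
          ∀ σ ∈ B, ¬ ConsLE σ (f k)) ∧
        (∀ j k, j ≠ k → ¬ ConsLE (f j) (f k))) ↔
      (∃ g : ℕ → List Bool,
        (∀ k, ∀ w : List Bool, w ≠ [] → assocPerm w ∈ B → ¬ w <:+: g k) ∧
        (∀ j k, j ≠ k → ¬ g j <:+: g k))) :=
  stmt19_general B hB
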